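/- arXiv:2407.20453 — 3 statements merged into one kernel-verified Lean document; each statement's English description precedes it below -/
import Mathlib

section
/- The exact fourth moment operator of the U(1)^d × S_d ensemble on (ℂ^d)^{⊗4}, Φ₄ = (1/(2π)^d d!)∑_σ ∫ (P_σe^{iφ})^{⊗2} ⊗ ((P_σe^{iφ})^†)^{⊗2} dφ, equals Φ₄ = A + B − C, where A = (1/d!)∑_{σ}∑_{l,k} |l k σ(l) σ(k)⟩⟨σ(l) σ(k) l k|, B = (1/d!)∑_{σ}∑_{l,k} |l k σ(k) σ(l)⟩⟨σ(l) σ(k) k l|, C = (1/d!)∑_{σ}∑_l |l l σ(l) σ(l)⟩⟨σ(l) σ(l) l l|. -/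
open Matrix BigOperators MeasureTheory

/-- The permutation matrix of `σ`, acting on the standard basis by `P_σ |l⟩ = |σ(l)⟩`. -/
noncomputable def permMat (d : ℕ) (σ : Equiv.Perm (Fin d)) : Matrix (Fin d) (Fin d) ℂ :=
  Matrix.of fun i j => if i = σ j then 1 else 0

/-- The diagonal unitary `e^{iφ} = ∑_l e^{iφ_l} |l⟩⟨l|`. -/
noncomputable def diagU (d : ℕ) (φ : Fin d → ℝ) : Matrix (Fin d) (Fin d) ℂ :=
  Matrix.diagonal fun l => Complex.exp (Complex.I * (φ l : ℂ))

/-- The integer "frequency" vector of the fourth-moment phase integral. -/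
def nfun {d : ℕ} (i3 i4 j1 j2 : Fin d) (l : Fin d) : ℤ :=
  (if j1 = l then 1 else 0) + (if j2 = l then 1 else 0)
    - (if i3 = l then 1 else 0) - (if i4 = l then 1 else 0)

lemma aux_int (n : ℤ) : ∫ x in Set.Icc (0:ℝ) (2*Real.pi), Complex.exp (Complex.I * n * x) =
    if n = 0 then ((2*Real.pi : ℝ):ℂ) else 0 := by
  rw [MeasureTheory.integral_Icc_eq_integral_Ioc,
    ← intervalIntegral.integral_of_le (by positivity : (0:ℝ) ≤ 2*Real.pi)]
  by_cases hn : n = 0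
  · simp [hn]
  · rw [if_neg hn]
    have hc : (Complex.I * n) ≠ 0 := by
      simp [Complex.I_ne_zero, Complex.ext_iff]
      exact_mod_cast hn
    have := integral_exp_mul_complex (a := 0) (b := 2*Real.pi) hc
    simp only [mul_assoc] at this ⊢
    rw [this]
    have h1 : Complex.I * ((n:ℂ) * ((2*Real.pi : ℝ):ℂ)) = (n:ℂ) * (2 * Real.pi * Complex.I) := by
      push_cast; ring
    rw [h1, Complex.exp_int_mul_two_pi_mul_I]
    simp

lemma aux_N_iff {d : ℕ} (i3 i4 j1 j2 : Fin d) :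
    (∀ l : Fin d, nfun i3 i4 j1 j2 l = 0) ↔
    ((i3 = j1 ∧ i4 = j2) ∨ (i3 = j2 ∧ i4 = j1)) := by
  constructor
  · intro h
    have h1 := h j1
    have h2 := h j2
    simp only [nfun] at h1 h2
    by_cases e1 : i3 = j1
    · by_cases e2 : i4 = j2
      · exact Or.inl ⟨e1, e2⟩
      · by_cases e4 : i4 = j1 <;> by_cases e5 : j2 = j1 <;> simp_all
    · by_cases e3 : i3 = j2
      · by_cases e4 : i4 = j1
        · exact Or.inr ⟨e3, e4⟩
        · by_cases e2 : i4 = j2 <;> by_cases e5 : j2 = j1 <;> simp_all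
      · by_cases e4 : i4 = j1 <;> by_cases e2 : i4 = j2 <;> by_cases e5 : j2 = j1 <;> simp_all
  · rintro (⟨h1, h2⟩ | ⟨h1, h2⟩) l <;> simp only [nfun, h1, h2] <;> split_ifs <;> omega

lemma entry_mul (d : ℕ) (σ : Equiv.Perm (Fin d)) (φ : Fin d → ℝ) (i j : Fin d) :
    (permMat d σ * diagU d φ) i j = if i = σ j then Complex.exp (Complex.I * (φ j : ℂ)) else 0 := by
  simp [permMat, diagU, Matrix.mul_diagonal, ite_mul]

lemma entry_conj (d : ℕ) (σ : Equiv.Perm (Fin d)) (φ : Fin d → ℝ) (i j : Fin d) :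
    ((permMat d σ * diagU d φ)ᴴ) i j =
      if j = σ i then Complex.exp (-(Complex.I * (φ i : ℂ))) else 0 := by
  rw [Matrix.conjTranspose_apply, entry_mul]
  by_cases h : j = σ i
  · simp only [h, if_true, Complex.star_def, ← Complex.exp_conj, _root_.map_mul, Complex.conj_I,
      Complex.conj_ofReal]
    ring_nf
  · simp [h]

lemma pi_integral (d : ℕ) (g : Fin d → ℝ → ℂ) :
    ∫ φ in Set.univ.pi (fun _ : Fin d => Set.Icc (0:ℝ) (2*Real.pi)), ∏ l, g l (φ l) =
    ∏ l, ∫ x in Set.Icc (0:ℝ) (2*Real.pi), g l x := by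
  rw [← MeasureTheory.integral_indicator (MeasurableSet.univ_pi (fun _ => measurableSet_Icc))]
  have h : (Set.univ.pi fun _ : Fin d => Set.Icc (0:ℝ) (2*Real.pi)).indicator
      (fun φ => ∏ l, g l (φ l)) =
      fun φ => ∏ l, (Set.Icc (0:ℝ) (2*Real.pi)).indicator (g l) (φ l) := by
    funext φ
    by_cases hφ : φ ∈ Set.univ.pi fun _ : Fin d => Set.Icc (0:ℝ) (2*Real.pi)
    · rw [Set.indicator_of_mem hφ]
      exact Finset.prod_congr rfl fun l _ => (Set.indicator_of_mem (hφ l trivial) _).symm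
    · rw [Set.indicator_of_notMem hφ]
      simp only [Set.mem_pi, Set.mem_univ, forall_true_left] at hφ
      push_neg at hφ
      obtain ⟨l, hl⟩ := hφ
      exact (Finset.prod_eq_zero (Finset.mem_univ l) (Set.indicator_of_notMem hl _)).symm
  rw [h, MeasureTheory.integral_fintype_prod_volume_eq_prod (ι := Fin d)
    (f := fun l x => (Set.Icc (0:ℝ) (2*Real.pi)).indicator (g l) x)]
  exact Finset.prod_congr rfl fun l _ => MeasureTheory.integral_indicator measurableSet_Icc

lemma iffA {d : ℕ} (τ : Equiv.Perm (Fin d)) (i1 i2 i3 i4 j1 j2 j3 j4 : Fin d) :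
    (i3 = τ i1 ∧ i4 = τ i2 ∧ j1 = τ i1 ∧ j2 = τ i2 ∧ j3 = i1 ∧ j4 = i2) ↔
    ((i1 = τ⁻¹ j1 ∧ i2 = τ⁻¹ j2 ∧ j3 = τ⁻¹ i3 ∧ j4 = τ⁻¹ i4) ∧ (i3 = j1 ∧ i4 = j2)) := by
  constructor
  · rintro ⟨h1, h2, h3, h4, h5, h6⟩
    subst h1; subst h2; subst h3; subst h4; subst h5; subst h6; simp
  · rintro ⟨⟨h1, h2, h3, h4⟩, h5, h6⟩
    subst h5; subst h6; subst h1; subst h2; subst h3; subst h4; simp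

lemma iffB {d : ℕ} (τ : Equiv.Perm (Fin d)) (i1 i2 i3 i4 j1 j2 j3 j4 : Fin d) :
    (i3 = τ i2 ∧ i4 = τ i1 ∧ j1 = τ i1 ∧ j2 = τ i2 ∧ j3 = i2 ∧ j4 = i1) ↔
    ((i1 = τ⁻¹ j1 ∧ i2 = τ⁻¹ j2 ∧ j3 = τ⁻¹ i3 ∧ j4 = τ⁻¹ i4) ∧ (i3 = j2 ∧ i4 = j1)) := by
  constructor
  · rintro ⟨h1, h2, h3, h4, h5, h6⟩
    subst h1; subst h2; subst h3; subst h4; subst h5; subst h6; simp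
  · rintro ⟨⟨h1, h2, h3, h4⟩, h5, h6⟩
    subst h5; subst h6; subst h1; subst h2; subst h3; subst h4; simp

lemma iffC {d : ℕ} (τ : Equiv.Perm (Fin d)) (i1 i2 i3 i4 j1 j2 j3 j4 : Fin d) :
    (i2 = i1 ∧ i3 = τ i1 ∧ i4 = τ i1 ∧ j1 = τ i1 ∧ j2 = τ i1 ∧ j3 = i1 ∧ j4 = i1) ↔
    ((i1 = τ⁻¹ j1 ∧ i2 = τ⁻¹ j2 ∧ j3 = τ⁻¹ i3 ∧ j4 = τ⁻¹ i4) ∧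
      ((i3 = j1 ∧ i4 = j2) ∧ (i3 = j2 ∧ i4 = j1))) := by
  constructor
  · rintro ⟨h0, h1, h2, h3, h4, h5, h6⟩
    subst h0; subst h1; subst h2; subst h3; subst h4; subst h5; subst h6; simp
  · rintro ⟨⟨h1, h2, h3, h4⟩, ⟨h5, h6⟩, h7, h8⟩
    subst h5; subst h6; subst h1; subst h2; subst h3; subst h4
    subst h7; simp

/-- The exact fourth moment operator of the `U(1)^d × S_d` ensemble, stated entrywise on
`(ℂ^d)^{⊗4}`:  the average of `U ⊗ U ⊗ U† ⊗ U†` over `U = P_σ e^{iφ}` (with `σ` uniform in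
`S_d` and `φ` uniform in `[0,2π]^d`) equals `A + B − C`, where
`A = (1/d!)∑_σ∑_{l,k} |l k σ(l) σ(k)⟩⟨σ(l) σ(k) l k|`,
`B = (1/d!)∑_σ∑_{l,k} |l k σ(k) σ(l)⟩⟨σ(l) σ(k) k l|`,
`C = (1/d!)∑_σ∑_l |l l σ(l) σ(l)⟩⟨σ(l) σ(l) l l|`. -/
theorem stmt5 (d : ℕ) (hd : 0 < d) (i1 i2 i3 i4 j1 j2 j3 j4 : Fin d) :
    (1 / ((2 * Real.pi) ^ d * Nat.factorial d) : ℂ) *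
        ∑ σ : Equiv.Perm (Fin d),
          ∫ φ in Set.univ.pi (fun _ : Fin d => Set.Icc (0 : ℝ) (2 * Real.pi)),
            ((permMat d σ * diagU d φ) i1 j1 * (permMat d σ * diagU d φ) i2 j2 *
              ((permMat d σ * diagU d φ)ᴴ i3 j3) * ((permMat d σ * diagU d φ)ᴴ i4 j4))
      =
      ((Nat.factorial d : ℂ))⁻¹ * (∑ σ : Equiv.Perm (Fin d), ∑ l, ∑ k,
          if (i1, i2, i3, i4) = (l, k, σ l, σ k) ∧ (j1, j2, j3, j4) = (σ l, σ k, l, k)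
          then (1 : ℂ) else 0)
      + ((Nat.factorial d : ℂ))⁻¹ * (∑ σ : Equiv.Perm (Fin d), ∑ l, ∑ k,
          if (i1, i2, i3, i4) = (l, k, σ k, σ l) ∧ (j1, j2, j3, j4) = (σ l, σ k, k, l)
          then (1 : ℂ) else 0)
      - ((Nat.factorial d : ℂ))⁻¹ * (∑ σ : Equiv.Perm (Fin d), ∑ l,
          if (i1, i2, i3, i4) = (l, l, σ l, σ l) ∧ (j1, j2, j3, j4) = (σ l, σ l, l, l)
          then (1 : ℂ) else 0) := by
  classical
  have key : ∀ σ : Equiv.Perm (Fin d),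
      (∫ φ in Set.univ.pi (fun _ : Fin d => Set.Icc (0 : ℝ) (2 * Real.pi)),
        ((permMat d σ * diagU d φ) i1 j1 * (permMat d σ * diagU d φ) i2 j2 *
          ((permMat d σ * diagU d φ)ᴴ i3 j3) * ((permMat d σ * diagU d φ)ᴴ i4 j4)))
      = if (i1 = σ j1 ∧ i2 = σ j2 ∧ j3 = σ i3 ∧ j4 = σ i4) ∧ (∀ l, nfun i3 i4 j1 j2 l = 0)
        then ((2 * Real.pi : ℂ)) ^ d else 0 := by
    intro σ
    by_cases hK : (i1 = σ j1 ∧ i2 = σ j2 ∧ j3 = σ i3 ∧ j4 = σ i4)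
    · obtain ⟨hK1, hK2, hK3, hK4⟩ := hK
      have hi : ∀ φ : Fin d → ℝ,
          ((permMat d σ * diagU d φ) i1 j1 * (permMat d σ * diagU d φ) i2 j2 *
            ((permMat d σ * diagU d φ)ᴴ i3 j3) * ((permMat d σ * diagU d φ)ᴴ i4 j4))
          = ∏ l, Complex.exp (Complex.I * ((nfun i3 i4 j1 j2 l : ℤ) : ℂ) * (φ l : ℂ)) := by
        intro φ
        rw [entry_mul, entry_mul, entry_conj, entry_conj, if_pos hK1, if_pos hK2, if_pos hK3,
          if_pos hK4, ← Complex.exp_add, ← Complex.exp_add, ← Complex.exp_add,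
          ← Complex.exp_sum]
        congr 1
        have hl : ∀ l : Fin d, Complex.I * ((nfun i3 i4 j1 j2 l : ℤ) : ℂ) * (φ l : ℂ) =
            (if j1 = l then Complex.I * (φ l : ℂ) else 0)
            + (if j2 = l then Complex.I * (φ l : ℂ) else 0)
            - (if i3 = l then Complex.I * (φ l : ℂ) else 0)
            - (if i4 = l then Complex.I * (φ l : ℂ) else 0) := by
          intro l
          simp only [nfun]
          push_cast
          split_ifs <;> ring
        rw [Finset.sum_congr rfl fun l _ => hl l]
        simp only [Finset.sum_sub_distrib, Finset.sum_add_distrib, Finset.sum_ite_eq,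
          Finset.mem_univ, if_true]
        ring
      simp only [hi]
      rw [pi_integral d (fun l x => Complex.exp (Complex.I * ((nfun i3 i4 j1 j2 l : ℤ) : ℂ) * x))]
      rw [Finset.prod_congr rfl fun l _ => aux_int (nfun i3 i4 j1 j2 l)]
      by_cases hN : ∀ l, nfun i3 i4 j1 j2 l = 0
      · rw [if_pos ⟨⟨hK1, hK2, hK3, hK4⟩, hN⟩,
          Finset.prod_congr rfl fun l _ => if_pos (hN l), Finset.prod_const]
        simp [Finset.card_univ]
      · rw [if_neg (fun h => hN h.2)]
        push_neg at hN
        obtain ⟨l, hl⟩ := hN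
        exact Finset.prod_eq_zero (Finset.mem_univ l) (if_neg hl)
    · have hi0 : ∀ φ : Fin d → ℝ,
          ((permMat d σ * diagU d φ) i1 j1 * (permMat d σ * diagU d φ) i2 j2 *
            ((permMat d σ * diagU d φ)ᴴ i3 j3) * ((permMat d σ * diagU d φ)ᴴ i4 j4)) = 0 := by
        intro φ
        rw [entry_mul, entry_mul, entry_conj, entry_conj]
        simp only [not_and_or] at hK
        rcases hK with h | h | h | h <;> simp [h]
      rw [if_neg (fun h => hK h.1)]
      simp only [hi0]
      exact integral_zero _ _
  rw [Finset.sum_congr rfl fun σ _ => key σ]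
  have hfac : ((Nat.factorial d : ℂ)) ≠ 0 := Nat.cast_ne_zero.mpr (Nat.factorial_ne_zero d)
  have hπ : ((2 * Real.pi : ℂ)) ^ d ≠ 0 :=
    pow_ne_zero _ (mul_ne_zero two_ne_zero (Complex.ofReal_ne_zero.mpr Real.pi_ne_zero))
  rw [Finset.sum_congr rfl fun σ _ =>
    (show (if (i1 = σ j1 ∧ i2 = σ j2 ∧ j3 = σ i3 ∧ j4 = σ i4) ∧ (∀ l, nfun i3 i4 j1 j2 l = 0)
        then ((2 * Real.pi : ℂ)) ^ d else 0)
      = ((2 * Real.pi : ℂ)) ^ d *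
        (if (i1 = σ j1 ∧ i2 = σ j2 ∧ j3 = σ i3 ∧ j4 = σ i4) ∧ (∀ l, nfun i3 i4 j1 j2 l = 0)
          then (1 : ℂ) else 0) from by split <;> ring)]
  rw [← Finset.mul_sum, ← mul_assoc,
    show (1 / ((2 * Real.pi : ℂ) ^ d * (Nat.factorial d : ℂ))) * ((2 * Real.pi : ℂ)) ^ d
      = ((Nat.factorial d : ℂ))⁻¹ from by field_simp]
  have hA : ∀ τ : Equiv.Perm (Fin d),
      (∑ l, ∑ k, if (i1, i2, i3, i4) = (l, k, τ l, τ k) ∧ (j1, j2, j3, j4) = (τ l, τ k, l, k)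
        then (1 : ℂ) else 0)
      = if (i3 = τ i1 ∧ i4 = τ i2 ∧ j1 = τ i1 ∧ j2 = τ i2 ∧ j3 = i1 ∧ j4 = i2)
        then (1 : ℂ) else 0 := by
    intro τ
    rw [Fintype.sum_eq_single i1 (fun l hl => Finset.sum_eq_zero fun k _ => if_neg (by
      rintro ⟨h, -⟩; simp only [Prod.mk.injEq] at h; exact hl h.1.symm)),
      Fintype.sum_eq_single i2 (fun k hk => if_neg (by
      rintro ⟨h, -⟩; simp only [Prod.mk.injEq] at h; exact hk h.2.1.symm))]
    apply if_congr _ rfl rfl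
    simp only [Prod.mk.injEq]
    constructor
    · rintro ⟨⟨-, -, h3, h4⟩, h5, h6, h7, h8⟩; exact ⟨h3, h4, h5, h6, h7, h8⟩
    · rintro ⟨h3, h4, h5, h6, h7, h8⟩; exact ⟨⟨trivial, trivial, h3, h4⟩, h5, h6, h7, h8⟩
  have hB : ∀ τ : Equiv.Perm (Fin d),
      (∑ l, ∑ k, if (i1, i2, i3, i4) = (l, k, τ k, τ l) ∧ (j1, j2, j3, j4) = (τ l, τ k, k, l)
        then (1 : ℂ) else 0)
      = if (i3 = τ i2 ∧ i4 = τ i1 ∧ j1 = τ i1 ∧ j2 = τ i2 ∧ j3 = i2 ∧ j4 = i1)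
        then (1 : ℂ) else 0 := by
    intro τ
    rw [Fintype.sum_eq_single i1 (fun l hl => Finset.sum_eq_zero fun k _ => if_neg (by
      rintro ⟨h, -⟩; simp only [Prod.mk.injEq] at h; exact hl h.1.symm)),
      Fintype.sum_eq_single i2 (fun k hk => if_neg (by
      rintro ⟨h, -⟩; simp only [Prod.mk.injEq] at h; exact hk h.2.1.symm))]
    apply if_congr _ rfl rfl
    simp only [Prod.mk.injEq]
    constructor
    · rintro ⟨⟨-, -, h3, h4⟩, h5, h6, h7, h8⟩; exact ⟨h3, h4, h5, h6, h7, h8⟩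
    · rintro ⟨h3, h4, h5, h6, h7, h8⟩; exact ⟨⟨trivial, trivial, h3, h4⟩, h5, h6, h7, h8⟩
  have hC : ∀ τ : Equiv.Perm (Fin d),
      (∑ l, if (i1, i2, i3, i4) = (l, l, τ l, τ l) ∧ (j1, j2, j3, j4) = (τ l, τ l, l, l)
        then (1 : ℂ) else 0)
      = if (i2 = i1 ∧ i3 = τ i1 ∧ i4 = τ i1 ∧ j1 = τ i1 ∧ j2 = τ i1 ∧ j3 = i1 ∧ j4 = i1)
        then (1 : ℂ) else 0 := by
    intro τ
    rw [Fintype.sum_eq_single i1 (fun l hl => if_neg (by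
      rintro ⟨h, -⟩; simp only [Prod.mk.injEq] at h; exact hl h.1.symm))]
    apply if_congr _ rfl rfl
    simp only [Prod.mk.injEq]
    constructor
    · rintro ⟨⟨-, h2, h3, h4⟩, h5, h6, h7, h8⟩; exact ⟨h2, h3, h4, h5, h6, h7, h8⟩
    · rintro ⟨h2, h3, h4, h5, h6, h7, h8⟩; exact ⟨⟨trivial, h2, h3, h4⟩, h5, h6, h7, h8⟩
  rw [Finset.sum_congr rfl fun τ _ => hA τ, Finset.sum_congr rfl fun τ _ => hB τ,
    Finset.sum_congr rfl fun τ _ => hC τ]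
  rw [← mul_add, ← mul_sub, ← Finset.sum_add_distrib, ← Finset.sum_sub_distrib]
  congr 1
  rw [← Equiv.sum_comp (Equiv.inv (Equiv.Perm (Fin d)))
    (fun σ => if (i1 = σ j1 ∧ i2 = σ j2 ∧ j3 = σ i3 ∧ j4 = σ i4)
      ∧ (∀ l, nfun i3 i4 j1 j2 l = 0) then (1 : ℂ) else 0)]
  apply Finset.sum_congr rfl
  intro τ _
  simp only [Equiv.inv_apply]
  rw [if_congr (and_congr_right fun _ => aux_N_iff i3 i4 j1 j2) rfl rfl,
    if_congr (iffA τ i1 i2 i3 i4 j1 j2 j3 j4) rfl rfl,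
    if_congr (iffB τ i1 i2 i3 i4 j1 j2 j3 j4) rfl rfl,
    if_congr (iffC τ i1 i2 i3 i4 j1 j2 j3 j4) rfl rfl]
  by_cases p : (i1 = τ⁻¹ j1 ∧ i2 = τ⁻¹ j2 ∧ j3 = τ⁻¹ i3 ∧ j4 = τ⁻¹ i4) <;>
    by_cases a : (i3 = j1 ∧ i4 = j2) <;> by_cases b : (i3 = j2 ∧ i4 = j1) <;>
    simp [p, a, b]
end

section
/- Let ℰ be a probability measure on the unitary group U(d) and define the 2k-th moment operator Φ_{2k}^ℰ = ∫ U^{⊗k} ⊗ (U†)^{⊗k} dμ_ℰ[U]. Then the Hilbert–Schmidt distance to the Haar moment operator satisfies Tr[(Φ_{2k}^ℰ − Φ_{2k}^{Haar})† (Φ_{2k}^ℰ − Φ_{2k}^{Haar})] = F_k^ℰ − F_k^{Haar}, where F_k^ℰ = ∫∫ |Tr(U†V)|^{2k} dμ_ℰ[U] dμ_ℰ[V] is the k-th frame potential. In particular F_k^ℰ ≥ F_k^{Haar} for every measure ℰ. -/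
open Matrix BigOperators MeasureTheory

noncomputable instance matrixMeasurableSpace (d : ℕ) :
    MeasurableSpace (Matrix (Fin d) (Fin d) ℂ) :=
  show MeasurableSpace (Fin d → Fin d → ℂ) from inferInstance

/-- The `2k`-th moment operator `Φ_{2k}^μ = ∫ U^{⊗k} ⊗ (U†)^{⊗k} dμ[U]`, written as a matrix
on `(ℂ^d)^{⊗2k}` (indices grouped as `k` "upper" and `k` "lower" tensor factors). -/
noncomputable def momentOp (d k : ℕ) (μ : Measure (Matrix (Fin d) (Fin d) ℂ)) :
    Matrix ((Fin k → Fin d) × (Fin k → Fin d)) ((Fin k → Fin d) × (Fin k → Fin d)) ℂ :=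
  Matrix.of fun r c =>
    ∫ U, (∏ a, U (r.1 a) (c.1 a)) * (∏ a, star (U (c.2 a) (r.2 a))) ∂μ

/-- The `k`-th frame potential `F_k^μ = ∫∫ |Tr(U†V)|^{2k} dμ[U] dμ[V]`. -/
noncomputable def framePot (d k : ℕ) (μ : Measure (Matrix (Fin d) (Fin d) ℂ)) : ℝ :=
  ∫ U, ∫ V, ‖(Uᴴ * V).trace‖ ^ (2 * k) ∂μ ∂μ

/-!
Expanding the Hilbert–Schmidt norm, every term `Tr[(Φ^μ)† Φ^λ]` equals
`∫∫ |Tr(U†V)|^{2k} dλ[V] dμ[U]`: entrywise, `U^{⊗k} ⊗ Ū^{⊗k}` paired with `V^{⊗k} ⊗ V̄^{⊗k}` gives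
`Tr(U†V)^k · conj(Tr(U†V))^k`. Left invariance of `ν` under the unitary `U†` makes the inner
integral against `ν` independent of `U`, so the three terms involving `ν` all equal `F_k^ν` and
the distance is `F_k^μ − F_k^ν`; it is nonnegative because `Tr(A†A) ≥ 0`.
-/

instance matrixBorelSpace (d : ℕ) : BorelSpace (Matrix (Fin d) (Fin d) ℂ) :=
  inferInstanceAs (BorelSpace (Fin d → Fin d → ℂ))

theorem Matrix.trace_conjTranspose_mul {m n R : Type*} [Fintype m] [Fintype n]
    [CommSemiring R] [StarRing R] (U V : Matrix m n R) :
    (Uᴴ * V).trace = ∑ j, ∑ i, star (U i j) * V i j := by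
  simp [Matrix.trace, Matrix.mul_apply]

theorem Fintype.sum_sum_pow {ι κ R : Type*} [Fintype ι] [Fintype κ] [CommSemiring R]
    (h : ι → κ → R) (k : ℕ) :
    (∑ i, ∑ j, h i j) ^ k = ∑ r : Fin k → ι, ∑ c : Fin k → κ, ∏ a, h (r a) (c a) := by
  classical
  rw [Fintype.sum_pow]
  exact Finset.sum_congr rfl fun r _ => Fintype.prod_sum fun a j => h (r a) j

theorem Complex.pow_mul_conj_pow (z : ℂ) (k : ℕ) :
    z ^ k * (starRingEnd ℂ) z ^ k = ((‖z‖ ^ (2 * k) : ℝ) : ℂ) := by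
  rw [← mul_pow, Complex.mul_conj', pow_mul]
  push_cast
  rfl

open scoped ComplexOrder in
theorem Matrix.re_trace_conjTranspose_mul_self_nonneg {m n : Type*} [Fintype m] [Fintype n]
    (A : Matrix m n ℂ) : 0 ≤ (Aᴴ * A).trace.re :=
  (Complex.nonneg_iff.mp (Matrix.posSemidef_conjTranspose_mul_self A).trace_nonneg).1

section MomentOperator

variable {d k : ℕ}

noncomputable def momentIntegrand (r c : (Fin k → Fin d) × (Fin k → Fin d))
    (U : Matrix (Fin d) (Fin d) ℂ) : ℂ :=
  (∏ a, U (r.1 a) (c.1 a)) * (∏ a, star (U (c.2 a) (r.2 a)))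

theorem momentOp_apply (μ : Measure (Matrix (Fin d) (Fin d) ℂ))
    (r c : (Fin k → Fin d) × (Fin k → Fin d)) :
    momentOp d k μ r c = ∫ U, momentIntegrand r c U ∂μ :=
  rfl

theorem integrable_momentIntegrand {μ : Measure (Matrix (Fin d) (Fin d) ℂ)} [IsFiniteMeasure μ]
    (hμ : ∀ᵐ U ∂μ, U ∈ Matrix.unitaryGroup (Fin d) ℂ) (r c : (Fin k → Fin d) × (Fin k → Fin d)) :
    Integrable (momentIntegrand r c) μ := by
  refine .of_bound (by unfold momentIntegrand; fun_prop) 1 (hμ.mono fun U hU => ?_)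
  have hentry := entry_norm_bound_of_unitary hU
  simp only [momentIntegrand, norm_mul, norm_prod, norm_star]
  exact mul_le_one₀ (Finset.prod_le_one (fun _ _ => norm_nonneg _) fun a _ => hentry _ _)
    (Finset.prod_nonneg fun _ _ => norm_nonneg _)
    (Finset.prod_le_one (fun _ _ => norm_nonneg _) fun a _ => hentry _ _)

theorem sum_sum_conj_momentIntegrand_mul (U V : Matrix (Fin d) (Fin d) ℂ) :
    ∑ c : (Fin k → Fin d) × (Fin k → Fin d), ∑ r : (Fin k → Fin d) × (Fin k → Fin d),
        (starRingEnd ℂ) (momentIntegrand r c U) * momentIntegrand r c V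
      = ((‖(Uᴴ * V).trace‖ ^ (2 * k) : ℝ) : ℂ) := by
  have hconj : (starRingEnd ℂ) (Uᴴ * V).trace = ∑ i, ∑ j, U i j * star (V i j) := by
    rw [Matrix.trace_conjTranspose_mul, map_sum, Finset.sum_comm]
    simp [mul_comm]
  rw [← Complex.pow_mul_conj_pow, hconj, Matrix.trace_conjTranspose_mul, Fintype.sum_sum_pow,
    Fintype.sum_sum_pow, Finset.sum_mul_sum]
  simp only [Fintype.sum_prod_type, Finset.sum_mul_sum, momentIntegrand]
  refine Finset.sum_congr rfl fun c₁ _ => Finset.sum_congr rfl fun c₂ _ =>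
    Finset.sum_congr rfl fun r₁ _ => Finset.sum_congr rfl fun r₂ _ => ?_
  simp only [map_mul, map_prod, Finset.prod_mul_distrib, RCLike.star_def, Complex.conj_conj]
  ring

theorem trace_conjTranspose_momentOp_mul_momentOp (μ ν : Measure (Matrix (Fin d) (Fin d) ℂ))
    [IsProbabilityMeasure μ] [IsProbabilityMeasure ν]
    (hμ : ∀ᵐ U ∂μ, U ∈ Matrix.unitaryGroup (Fin d) ℂ)
    (hν : ∀ᵐ U ∂ν, U ∈ Matrix.unitaryGroup (Fin d) ℂ) :
    ((momentOp d k μ)ᴴ * momentOp d k ν).trace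
      = ((∫ U, ∫ V, ‖(Uᴴ * V).trace‖ ^ (2 * k) ∂ν ∂μ : ℝ) : ℂ) := by
  have hint : ∀ r c : (Fin k → Fin d) × (Fin k → Fin d), Integrable
      (fun z : Matrix (Fin d) (Fin d) ℂ × Matrix (Fin d) (Fin d) ℂ =>
        (starRingEnd ℂ) (momentIntegrand r c z.1) * momentIntegrand r c z.2) (μ.prod ν) :=
    fun r c => (Complex.conjCLE.toContinuousLinearMap.integrable_comp
      (integrable_momentIntegrand hμ r c)).mul_prod (integrable_momentIntegrand hν r c)
  have hint_sum := integrable_finsetSum Finset.univ fun c _ =>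
    integrable_finsetSum Finset.univ fun r _ => hint r c
  simp only [sum_sum_conj_momentIntegrand_mul] at hint_sum
  calc ((momentOp d k μ)ᴴ * momentOp d k ν).trace
      = ∑ c, ∑ r, ∫ z, (starRingEnd ℂ) (momentIntegrand r c z.1) * momentIntegrand r c z.2
          ∂(μ.prod ν) := by
        simp only [Matrix.trace, Matrix.diag, Matrix.mul_apply, Matrix.conjTranspose_apply,
          momentOp_apply, RCLike.star_def]
        refine Finset.sum_congr rfl fun c _ => Finset.sum_congr rfl fun r _ => ?_
        rw [integral_prod_mul (fun U => (starRingEnd ℂ) (momentIntegrand r c U)), integral_conj]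
    _ = ∫ z, ((‖(z.1ᴴ * z.2).trace‖ ^ (2 * k) : ℝ) : ℂ) ∂(μ.prod ν) := by
        simp only [← sum_sum_conj_momentIntegrand_mul]
        rw [integral_finsetSum _ fun c _ => integrable_finsetSum _ fun r _ => hint r c]
        exact Finset.sum_congr rfl fun c _ => (integral_finsetSum _ fun r _ => hint r c).symm
    _ = ((∫ U, ∫ V, ‖(Uᴴ * V).trace‖ ^ (2 * k) ∂ν ∂μ : ℝ) : ℂ) := by
        simp only [integral_prod _ hint_sum, integral_complex_ofReal]

end MomentOperator

section LeftInvariant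

variable {d : ℕ} {ν : Measure (Matrix (Fin d) (Fin d) ℂ)}

theorem integral_comp_mul_left_of_map_eq {E : Type*} [NormedAddCommGroup E] [NormedSpace ℝ E]
    {A : Matrix (Fin d) (Fin d) ℂ} (hA : Measure.map (fun U => A * U) ν = ν)
    {g : Matrix (Fin d) (Fin d) ℂ → E} (hg : AEStronglyMeasurable g ν) :
    ∫ V, g (A * V) ∂ν = ∫ V, g V ∂ν := by
  rw [← integral_map (by fun_prop) (hA.symm ▸ hg), hA]

theorem integral_integral_norm_trace_pow_of_map_mul_left
    (μ : Measure (Matrix (Fin d) (Fin d) ℂ)) [IsProbabilityMeasure μ]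
    (hμ : ∀ᵐ U ∂μ, U ∈ Matrix.unitaryGroup (Fin d) ℂ)
    (hν : ∀ V ∈ Matrix.unitaryGroup (Fin d) ℂ, Measure.map (fun U => V * U) ν = ν) (n : ℕ) :
    ∫ U, ∫ V, ‖(Uᴴ * V).trace‖ ^ n ∂ν ∂μ = ∫ W, ‖W.trace‖ ^ n ∂ν := by
  have hinner : ∀ᵐ U ∂μ, ∫ V, ‖(Uᴴ * V).trace‖ ^ n ∂ν = ∫ W, ‖W.trace‖ ^ n ∂ν :=
    hμ.mono fun U hU => integral_comp_mul_left_of_map_eq (g := fun W => ‖W.trace‖ ^ n)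
      (hν _ (Unitary.star_mem hU)) (by fun_prop)
  rw [integral_congr_ae hinner, integral_const, probReal_univ, one_smul]

end LeftInvariant

theorem stmt6_general (d k : ℕ) (μ ν : Measure (Matrix (Fin d) (Fin d) ℂ))
    [IsProbabilityMeasure μ] [IsProbabilityMeasure ν]
    (hμsupp : ∀ᵐ U ∂μ, U ∈ Matrix.unitaryGroup (Fin d) ℂ)
    (hνsupp : ∀ᵐ U ∂ν, U ∈ Matrix.unitaryGroup (Fin d) ℂ)
    (hνleft : ∀ V ∈ Matrix.unitaryGroup (Fin d) ℂ,
      Measure.map (fun U => V * U) ν = ν) :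
    ((momentOp d k μ - momentOp d k ν)ᴴ * (momentOp d k μ - momentOp d k ν)).trace
        = ((framePot d k μ - framePot d k ν : ℝ) : ℂ) ∧
      framePot d k ν ≤ framePot d k μ := by
  have hAA : ((momentOp d k μ)ᴴ * momentOp d k μ).trace = framePot d k μ :=
    trace_conjTranspose_momentOp_mul_momentOp μ μ hμsupp hμsupp
  have hBB : ((momentOp d k ν)ᴴ * momentOp d k ν).trace = framePot d k ν :=
    trace_conjTranspose_momentOp_mul_momentOp ν ν hνsupp hνsupp
  have hAB : ((momentOp d k μ)ᴴ * momentOp d k ν).trace = framePot d k ν := by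
    rw [trace_conjTranspose_momentOp_mul_momentOp μ ν hμsupp hνsupp,
      integral_integral_norm_trace_pow_of_map_mul_left μ hμsupp hνleft,
      ← integral_integral_norm_trace_pow_of_map_mul_left ν hνsupp hνleft]
    rfl
  have hBA : ((momentOp d k ν)ᴴ * momentOp d k μ).trace = framePot d k ν := by
    rw [← Matrix.conjTranspose_conjTranspose (momentOp d k μ), ← Matrix.conjTranspose_mul,
      Matrix.trace_conjTranspose, hAB, Complex.star_def, Complex.conj_ofReal]
  have hdist : ((momentOp d k μ - momentOp d k ν)ᴴ * (momentOp d k μ - momentOp d k ν)).trace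
      = ((framePot d k μ - framePot d k ν : ℝ) : ℂ) := by
    simp only [Matrix.conjTranspose_sub, Matrix.sub_mul, Matrix.mul_sub, Matrix.trace_sub]
    rw [hAA, hBB, hAB, hBA]
    push_cast
    ring
  have hnonneg := Matrix.re_trace_conjTranspose_mul_self_nonneg (momentOp d k μ - momentOp d k ν)
  rw [hdist, Complex.ofReal_re] at hnonneg
  exact ⟨hdist, sub_nonneg.mp hnonneg⟩

/-- For a probability measure `μ` on the unitary group and the (normalized, two-sided
invariant) Haar probability measure `ν` on the unitary group, the Hilbert–Schmidt distance of
moment operators satisfies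
`Tr[(Φ_{2k}^μ − Φ_{2k}^ν)†(Φ_{2k}^μ − Φ_{2k}^ν)] = F_k^μ − F_k^ν`; in particular
`F_k^ν ≤ F_k^μ`. -/
theorem stmt6 (d k : ℕ) (μ ν : Measure (Matrix (Fin d) (Fin d) ℂ))
    [IsProbabilityMeasure μ] [IsProbabilityMeasure ν]
    (hμsupp : ∀ᵐ U ∂μ, U ∈ Matrix.unitaryGroup (Fin d) ℂ)
    (hνsupp : ∀ᵐ U ∂ν, U ∈ Matrix.unitaryGroup (Fin d) ℂ)
    (hνleft : ∀ V ∈ Matrix.unitaryGroup (Fin d) ℂ,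
      Measure.map (fun U => V * U) ν = ν)
    (hνright : ∀ V ∈ Matrix.unitaryGroup (Fin d) ℂ,
      Measure.map (fun U => U * V) ν = ν) :
    ((momentOp d k μ - momentOp d k ν)ᴴ * (momentOp d k μ - momentOp d k ν)).trace
        = ((framePot d k μ - framePot d k ν : ℝ) : ℂ) ∧
      framePot d k ν ≤ framePot d k μ :=
  stmt6_general d k μ ν hμsupp hνsupp hνleft
end

section
/- For d×d operators W satisfying the Haar average formula, the Haar-averaged infinite-temperature two-point function decouples spectrally: ∫_{U(d)} (1/d)·Tr(e^{itE} U W U† e^{−itE} U W U†) dU = ⟨W⟩² + ((|Z(it)|² − 1)/(d² − 1))·(⟨W²⟩ − ⟨W⟩²), where E is any fixed diagonal real matrix, Z(it) = Tr e^{itE}, ⟨W⟩ = Tr(W)/d, ⟨W²⟩ = Tr(W²)/d, and dU is normalized Haar measure on U(d) (d ≥ 2). -/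
open Matrix BigOperators MeasureTheory

/-!
Write `X = U W Uᴴ` and `G(a,b,c,e) = ∫ X_ab X_ce`. Left invariance of the measure makes `G`
invariant under conjugating `X` by any fixed unitary. Diagonal phases kill `G` unless the
indices pair up (`a = b, c = e` or `a = e, c = b`), and permutation matrices show that the
surviving values are `Q = G(a,a,a,a)`, `P = G(a,b,b,a)` and `R = G(a,a,b,b)` (`a ≠ b`),
independently of the indices. Summing `G(a,b,b,a)` and `G(a,a,b,b)` gives `tr W²` and `(tr W)²`,
and a Householder reflection mixing two coordinates gives `Q = P + R`; solving these equations
yields the Weingarten values of `Q` and `P`. Finally the two-point function equals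
`(1/d) ∑_{a,b} e^{it(E_a - E_b)} G(a,b,b,a) = (|Z|² P + d (Q - P)) / d`.
-/

lemma exists_perm_apply_eq_apply_eq {α : Type*} [DecidableEq α] {a b c e : α} (hab : a ≠ b)
    (hce : c ≠ e) : ∃ σ : Equiv.Perm α, σ a = c ∧ σ b = e := by
  refine ⟨(Equiv.swap a c).trans (Equiv.swap (Equiv.swap a c b) e), ?_, by simp⟩
  have : Equiv.swap a c b ≠ c := by simpa [Equiv.swap_apply_eq_iff] using hab.symm
  simp [Equiv.swap_apply_of_ne_of_ne this.symm hce]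

lemma Finset.sum_sum_mul_of_diag_of_offDiag {ι R : Type*} [Fintype ι] [DecidableEq ι]
    [CommRing R] {f : ι → ι → R} {x y : R} (hdiag : ∀ a, f a a = x)
    (hoff : ∀ a b, a ≠ b → f a b = y) (α β : ι → R) :
    ∑ a, ∑ b, α a * β b * f a b =
      (∑ a, α a) * (∑ b, β b) * y + (∑ a, α a * β a) * (x - y) := by
  have hf (a b : ι) : f a b = y + if a = b then x - y else 0 := by
    by_cases h : a = b
    · simp [h, hdiag]
    · simp [h, hoff a b h]
  simp only [hf, mul_add, mul_ite, mul_zero, Finset.sum_add_distrib, Finset.sum_ite_eq,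
    Finset.mem_univ, if_true, Finset.mul_sum, Finset.sum_mul]
  rw [Finset.sum_comm]

namespace Matrix

lemma diagonal_mem_unitaryGroup {n : Type*} [Fintype n] [DecidableEq n] {ε : n → ℂ}
    (hε : ∀ k, star (ε k) * ε k = 1) : diagonal ε ∈ unitaryGroup n ℂ := by
  rw [mem_unitaryGroup_iff', star_eq_conjTranspose, diagonal_conjTranspose,
    diagonal_mul_diagonal, ← diagonal_one]
  exact congrArg diagonal (funext hε)

lemma permMatrix_mem_unitaryGroup {n : Type*} [Fintype n] [DecidableEq n]
    (σ : Equiv.Perm n) : σ.permMatrix ℂ ∈ unitaryGroup n ℂ := by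
  rw [mem_unitaryGroup_iff', star_eq_conjTranspose, conjTranspose_permMatrix,
    ← permMatrix_mul, mul_inv_cancel, permMatrix_one]

lemma householder_mem_unitaryGroup {n : Type*} [Fintype n] [DecidableEq n] (u : n → ℂ)
    (hu : star u ⬝ᵥ u ≠ 0) :
    1 - (2 / (star u ⬝ᵥ u)) • vecMulVec u (star u) ∈ unitaryGroup n ℂ := by
  set s := star u ⬝ᵥ u
  have hs : star s = s := by rw [← star_dotProduct]
  have hsq : vecMulVec u (star u) * vecMulVec u (star u) = s • vecMulVec u (star u) := by
    rw [vecMulVec_mul_vecMulVec, vecMulVec_smul]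
  have hc : 2 / s * (2 / s) * s = 2 / s + 2 / s := by field_simp; ring
  rw [mem_unitaryGroup_iff', star_sub, star_one, star_smul, star_eq_conjTranspose,
    conjTranspose_vecMulVec, star_star, star_div₀, hs, star_ofNat, sub_mul, mul_sub, mul_sub,
    smul_mul_smul_comm, hsq, smul_smul, hc, add_smul, one_mul, mul_one, one_mul]
  abel

lemma mul_mul_conjTranspose_apply {n : Type*} [Fintype n] (V X : Matrix n n ℂ) (a b : n) :
    (V * X * Vᴴ) a b = ∑ i, ∑ j, V a i * star (V b j) * X i j := by
  simp only [mul_apply, conjTranspose_apply, Finset.sum_mul]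
  rw [Finset.sum_comm]
  exact Finset.sum_congr rfl fun i _ => Finset.sum_congr rfl fun j _ => by ring

lemma conj_mul_conj_of_mem_unitaryGroup {n : Type*} [Fintype n] [DecidableEq n] {U : Matrix n n ℂ}
    (hU : U ∈ unitaryGroup n ℂ) (A B : Matrix n n ℂ) :
    U * A * Uᴴ * (U * B * Uᴴ) = U * (A * B) * Uᴴ := by
  have h : Uᴴ * U = 1 := mem_unitaryGroup_iff'.mp hU
  simp only [Matrix.mul_assoc]
  rw [← Matrix.mul_assoc Uᴴ, h, Matrix.one_mul]

lemma trace_conj_of_mem_unitaryGroup {n : Type*} [Fintype n] [DecidableEq n] {U : Matrix n n ℂ}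
    (hU : U ∈ unitaryGroup n ℂ) (A : Matrix n n ℂ) : (U * A * Uᴴ).trace = A.trace := by
  have h : Uᴴ * U = 1 := mem_unitaryGroup_iff'.mp hU
  rw [trace_mul_cycle, h, Matrix.one_mul]

lemma trace_diagonal_mul_diagonal_mul {n : Type*} [Fintype n] [DecidableEq n]
    (α β : n → ℂ) (X : Matrix n n ℂ) :
    (diagonal α * X * diagonal β * X).trace = ∑ a, ∑ b, α a * β b * (X a b * X b a) := by
  simp only [trace, diag, mul_apply (M := diagonal α * X * diagonal β), mul_diagonal,
    diagonal_mul]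
  exact Finset.sum_congr rfl fun a _ => Finset.sum_congr rfl fun b _ => by ring

end Matrix

lemma Complex.ofReal_normSq_sum_exp {ι : Type*} [Fintype ι] (x : ι → ℂ)
    (hx : ∀ l, (starRingEnd ℂ) (x l) = -x l) :
    ((Complex.normSq (∑ l, Complex.exp (x l)) : ℝ) : ℂ) =
      (∑ l, Complex.exp (x l)) * ∑ l, Complex.exp (-x l) := by
  rw [← Complex.mul_conj, map_sum]
  simp only [← Complex.exp_conj, hx]

namespace UnitaryMoment

variable {d : ℕ}

instance : BorelSpace (Matrix (Fin d) (Fin d) ℂ) :=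
  inferInstanceAs (BorelSpace (Fin d → Fin d → ℂ))

structure IsHaarOnUnitaryGroup (ν : Measure (Matrix (Fin d) (Fin d) ℂ)) : Prop where
  ae_mem : ∀ᵐ U ∂ν, U ∈ unitaryGroup (Fin d) ℂ
  map_mul_left : ∀ V ∈ unitaryGroup (Fin d) ℂ, ν.map (V * ·) = ν

variable {ν : Measure (Matrix (Fin d) (Fin d) ℂ)}

lemma _root_.Continuous.integrable_of_ae_mem_unitaryGroup [IsFiniteMeasure ν]
    (hν : ∀ᵐ U ∂ν, U ∈ unitaryGroup (Fin d) ℂ) {f : Matrix (Fin d) (Fin d) ℂ → ℂ}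
    (hf : Continuous f) : Integrable f ν := by
  let K : Set (Matrix (Fin d) (Fin d) ℂ) :=
    Set.univ.pi fun _ => Set.univ.pi fun _ => Metric.closedBall 0 1
  have hK : IsCompact K :=
    isCompact_univ_pi fun _ => isCompact_univ_pi fun _ => isCompact_closedBall 0 1
  have hνK : ∀ᵐ U ∂ν, U ∈ K := by
    filter_upwards [hν] with U hU
    exact fun i _ j _ => by simpa using entry_norm_bound_of_unitary hU i j
  rw [← Measure.restrict_eq_self_of_ae_mem hνK]
  exact hf.continuousOn.integrableOn_compact hK

lemma integral_sum_sum [IsFiniteMeasure ν] (hν : ∀ᵐ U ∂ν, U ∈ unitaryGroup (Fin d) ℂ)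
    {f : Fin d → Fin d → Matrix (Fin d) (Fin d) ℂ → ℂ}
    (hf : ∀ a b, Continuous (f a b)) :
    ∫ U, ∑ a, ∑ b, f a b U ∂ν = ∑ a, ∑ b, ∫ U, f a b U ∂ν := by
  rw [integral_finsetSum _ fun a _ => Continuous.integrable_of_ae_mem_unitaryGroup hν
    (by fun_prop)]
  exact Finset.sum_congr rfl fun a _ =>
    integral_finsetSum _ fun b _ => (hf a b).integrable_of_ae_mem_unitaryGroup hν

lemma IsHaarOnUnitaryGroup.integral_comp_mul_left (hν : IsHaarOnUnitaryGroup ν)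
    {V : Matrix (Fin d) (Fin d) ℂ} (hV : V ∈ unitaryGroup (Fin d) ℂ)
    {f : Matrix (Fin d) (Fin d) ℂ → ℂ} (hf : Continuous f) :
    ∫ U, f (V * U) ∂ν = ∫ U, f U ∂ν := by
  conv_rhs => rw [← hν.map_mul_left V hV]
  exact (integral_map (by fun_prop) hf.aestronglyMeasurable).symm

noncomputable def moment (W : Matrix (Fin d) (Fin d) ℂ)
    (ν : Measure (Matrix (Fin d) (Fin d) ℂ)) (a b c e : Fin d) : ℂ :=
  ∫ U, (U * W * Uᴴ) a b * (U * W * Uᴴ) c e ∂ν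

variable (W : Matrix (Fin d) (Fin d) ℂ)

lemma moment_eq_integral_conj (hν : IsHaarOnUnitaryGroup ν)
    {V : Matrix (Fin d) (Fin d) ℂ} (hV : V ∈ unitaryGroup (Fin d) ℂ) (a b c e : Fin d) :
    moment W ν a b c e =
      ∫ U, (V * (U * W * Uᴴ) * Vᴴ) a b * (V * (U * W * Uᴴ) * Vᴴ) c e ∂ν := by
  have h (U : Matrix (Fin d) (Fin d) ℂ) : V * (U * W * Uᴴ) * Vᴴ = V * U * W * (V * U)ᴴ := by
    simp only [conjTranspose_mul, Matrix.mul_assoc]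
  simp_rw [h]
  exact (hν.integral_comp_mul_left hV (f := fun U => (U * W * Uᴴ) a b * (U * W * Uᴴ) c e)
    (by fun_prop)).symm

section FiniteMeasure

variable [IsFiniteMeasure ν]

lemma moment_eq_sum (hν : IsHaarOnUnitaryGroup ν) {V : Matrix (Fin d) (Fin d) ℂ}
    (hV : V ∈ unitaryGroup (Fin d) ℂ) (a b c e : Fin d) :
    moment W ν a b c e = ∑ i, ∑ j, ∑ k, ∑ l,
      V a i * star (V b j) * V c k * star (V e l) * moment W ν i j k l := by
  have h (U : Matrix (Fin d) (Fin d) ℂ) :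
      (V * (U * W * Uᴴ) * Vᴴ) a b * (V * (U * W * Uᴴ) * Vᴴ) c e =
        ∑ i, ∑ j, ∑ k, ∑ l, V a i * star (V b j) * V c k * star (V e l) *
          ((U * W * Uᴴ) i j * (U * W * Uᴴ) k l) := by
    rw [mul_mul_conjTranspose_apply V, mul_mul_conjTranspose_apply V, Finset.sum_mul_sum]
    refine Finset.sum_congr rfl fun i _ => ?_
    simp_rw [Finset.sum_mul_sum]
    rw [Finset.sum_comm]
    exact Finset.sum_congr rfl fun j _ => Finset.sum_congr rfl fun k _ =>
      Finset.sum_congr rfl fun l _ => by ring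
  rw [moment_eq_integral_conj W hν hV]
  simp_rw [h, ← Finset.sum_product']
  rw [integral_finsetSum _ fun x _ => Continuous.integrable_of_ae_mem_unitaryGroup hν.ae_mem
    (by fun_prop)]
  simp only [moment, integral_const_mul]

lemma moment_eq_phase_mul (hν : IsHaarOnUnitaryGroup ν) {ε : Fin d → ℂ}
    (hε : ∀ k, star (ε k) * ε k = 1) (a b c e : Fin d) :
    moment W ν a b c e = ε a * star (ε b) * ε c * star (ε e) * moment W ν a b c e := by
  conv_lhs => rw [moment_eq_sum W hν (diagonal_mem_unitaryGroup hε)]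
  simp [diagonal_apply, apply_ite]

lemma moment_perm (hν : IsHaarOnUnitaryGroup ν) (σ : Equiv.Perm (Fin d)) (a b c e : Fin d) :
    moment W ν a b c e = moment W ν (σ a) (σ b) (σ c) (σ e) := by
  rw [moment_eq_sum W hν (permMatrix_mem_unitaryGroup σ)]
  simp [PEquiv.toMatrix_apply]

lemma moment_eq_zero_of_not_paired (hν : IsHaarOnUnitaryGroup ν) {a b c e : Fin d}
    (h : ¬((a = b ∧ c = e) ∨ (a = e ∧ c = b))) : moment W ν a b c e = 0 := by
  -- The phase `i` at the index `j` multiplies `G(a,b,c,e)` by `i ^ (#j in (a,c) - #j in (b,e))`,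
  -- which is `i`, `-1` or `-i` for this choice of `j`.
  set j := if a = b ∨ a = e then c else a
  let ε : Fin d → ℂ := fun k => if k = j then Complex.I else 1
  have hG := moment_eq_phase_mul W hν (ε := ε) (fun k => by simp only [ε]; split_ifs <;> simp)
    a b c e
  have hφ : ε a * star (ε b) * ε c * star (ε e) ≠ 1 := by
    simp only [ε, j]
    by_cases hab : a = b <;> by_cases hae : a = e <;> by_cases hcb : c = b <;>
      by_cases hce : c = e <;>
      simp_all [eq_comm, Complex.ext_iff, apply_ite, (by norm_num : (1 : ℝ) ≠ -1)]
  by_contra hne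
  exact hφ ((mul_eq_right₀ hne).mp hG.symm)

lemma moment_diag_eq_add (hν : IsHaarOnUnitaryGroup ν) {p q : Fin d} (hpq : p ≠ q) :
    moment W ν p p p p = moment W ν p q q p + moment W ν p p q q := by
  -- The Householder reflection along `e_p - 2 e_q` has `p`-th row `(3 e_p + 4 e_q) / 5`, so
  -- conjugating by it gives `625 Q = 337 Q + 288 (P + R)` in the notation of the header.
  let u : Fin d → ℂ := Pi.single p 1 - Pi.single q 2
  have hu : star u ⬝ᵥ u = 5 := by
    norm_num [u, dotProduct, Pi.single_apply, sub_mul, mul_sub, Finset.sum_sub_distrib, hpq,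
      hpq.symm, map_ofNat]
  let w : Fin d → ℂ := fun i => if i = p then 3 / 5 else if i = q then 4 / 5 else 0
  have hrow : (1 - (2 / (star u ⬝ᵥ u)) • vecMulVec u (star u)) p = w := by
    ext i
    rw [hu]
    rcases eq_or_ne i p with rfl | hip
    · norm_num [u, w, vecMulVec_apply, hpq]
    rcases eq_or_ne i q with rfl | hiq
    · norm_num [u, w, vecMulVec_apply, hpq, hpq.symm]
    · simp [u, w, vecMulVec_apply, one_apply, hip, hiq, hip.symm]
  have hw (i : Fin d) : star (w i) = w i := by
    by_cases hip : i = p <;> by_cases hiq : i = q <;> simp [w, hip, hiq, hpq.symm]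
  have hpair (f : Fin d → ℂ) : ∑ i, w i * f i = w p * f p + w q * f q :=
    Fintype.sum_eq_add p q hpq fun i hi => by simp [w, hi.1, hi.2]
  have h := moment_eq_sum W hν (householder_mem_unitaryGroup u (by rw [hu]; norm_num)) p p p p
  simp only [hrow, hw, mul_assoc, ← Finset.mul_sum, hpair] at h
  have h₁ := moment_perm W hν (Equiv.swap p q) p p p p
  have h₂ := moment_perm W hν (Equiv.swap p q) p q q p
  have h₃ := moment_perm W hν (Equiv.swap p q) p p q q
  simp only [Equiv.swap_apply_left, Equiv.swap_apply_right] at h₁ h₂ h₃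
  simp only [w, if_true, if_false, hpq, hpq.symm, moment_eq_zero_of_not_paired W hν, ← h₁, ← h₂,
    ← h₃, and_false, and_true, or_self, not_false_eq_true, mul_zero, add_zero, zero_add] at h
  linear_combination (625 / 288 : ℂ) * h

lemma moment_diag_eq (hν : IsHaarOnUnitaryGroup ν) (a b : Fin d) :
    moment W ν a a a a = moment W ν b b b b := by
  simpa using moment_perm W hν (Equiv.swap a b) a a a a

lemma moment_offDiag_eq (hν : IsHaarOnUnitaryGroup ν) {a b c e : Fin d} (hab : a ≠ b)
    (hce : c ≠ e) :
    moment W ν a b b a = moment W ν c e e c ∧ moment W ν a a b b = moment W ν c c e e := by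
  obtain ⟨σ, rfl, rfl⟩ := exists_perm_apply_eq_apply_eq hab hce
  exact ⟨moment_perm W hν σ a b b a, moment_perm W hν σ a a b b⟩

lemma integral_trace_diagonal_mul_diagonal_mul
    (hν : ∀ᵐ U ∂ν, U ∈ unitaryGroup (Fin d) ℂ) (α β : Fin d → ℂ) :
    ∫ U, (diagonal α * U * W * Uᴴ * diagonal β * U * W * Uᴴ).trace ∂ν =
      ∑ a, ∑ b, α a * β b * moment W ν a b b a := by
  have h (U : Matrix (Fin d) (Fin d) ℂ) :
      diagonal α * U * W * Uᴴ * diagonal β * U * W * Uᴴ =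
        diagonal α * (U * W * Uᴴ) * diagonal β * (U * W * Uᴴ) := by
    simp only [Matrix.mul_assoc]
  simp_rw [h, trace_diagonal_mul_diagonal_mul]
  rw [integral_sum_sum hν fun a b => by fun_prop]
  simp only [moment, integral_const_mul]

end FiniteMeasure

variable [IsProbabilityMeasure ν]

lemma sum_moment_abba (hν : IsHaarOnUnitaryGroup ν) :
    ∑ a, ∑ b, moment W ν a b b a = (W * W).trace := by
  simp only [moment]
  rw [← integral_sum_sum hν.ae_mem fun a b => by fun_prop]
  have h : ∀ᵐ U ∂ν,
      ∑ a, ∑ b, (U * W * Uᴴ) a b * (U * W * Uᴴ) b a = (W * W).trace := by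
    filter_upwards [hν.ae_mem] with U hU
    rw [← trace_conj_of_mem_unitaryGroup hU, ← conj_mul_conj_of_mem_unitaryGroup hU]
    simp [trace, mul_apply]
  simp [integral_congr_ae h]

lemma sum_moment_aabb (hν : IsHaarOnUnitaryGroup ν) :
    ∑ a, ∑ b, moment W ν a a b b = W.trace ^ 2 := by
  simp only [moment]
  rw [← integral_sum_sum hν.ae_mem fun a b => by fun_prop]
  have h : ∀ᵐ U ∂ν, ∑ a, ∑ b, (U * W * Uᴴ) a a * (U * W * Uᴴ) b b = W.trace ^ 2 := by
    filter_upwards [hν.ae_mem] with U hU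
    rw [sq, ← trace_conj_of_mem_unitaryGroup hU, trace, Finset.sum_mul_sum]
    rfl
  simp [integral_congr_ae h]

lemma trace_mul_self_eq_moment (hν : IsHaarOnUnitaryGroup ν) {p q : Fin d} (hpq : p ≠ q) :
    (W * W).trace = d * moment W ν p p p p + ((d : ℂ) ^ 2 - d) * moment W ν p q q p := by
  have h := Finset.sum_sum_mul_of_diag_of_offDiag (f := fun a b => moment W ν a b b a)
    (moment_diag_eq W hν · p) (fun a b hab => (moment_offDiag_eq W hν hab hpq).1) 1 1
  simp only [Pi.one_apply, one_mul, Finset.sum_const, Finset.card_univ, Fintype.card_fin,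
    nsmul_eq_mul, mul_one, sum_moment_abba W hν] at h
  linear_combination h

lemma trace_sq_eq_moment (hν : IsHaarOnUnitaryGroup ν) {p q : Fin d} (hpq : p ≠ q) :
    W.trace ^ 2 = d * moment W ν p p p p + ((d : ℂ) ^ 2 - d) * moment W ν p p q q := by
  have h := Finset.sum_sum_mul_of_diag_of_offDiag (f := fun a b => moment W ν a a b b)
    (moment_diag_eq W hν · p) (fun a b hab => (moment_offDiag_eq W hν hab hpq).2) 1 1
  simp only [Pi.one_apply, one_mul, Finset.sum_const, Finset.card_univ, Fintype.card_fin,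
    nsmul_eq_mul, mul_one, sum_moment_aabb W hν] at h
  linear_combination h

lemma moment_diag_weingarten (hν : IsHaarOnUnitaryGroup ν) {p q : Fin d} (hpq : p ≠ q) :
    (d : ℂ) * (d + 1) * moment W ν p p p p = (W * W).trace + W.trace ^ 2 := by
  linear_combination -trace_mul_self_eq_moment W hν hpq - trace_sq_eq_moment W hν hpq +
    ((d : ℂ) ^ 2 - d) * moment_diag_eq_add W hν hpq

lemma moment_offDiag_weingarten (hν : IsHaarOnUnitaryGroup ν) {p q : Fin d} (hpq : p ≠ q) :
    (d : ℂ) * ((d : ℂ) ^ 2 - 1) * moment W ν p q q p = d * (W * W).trace - W.trace ^ 2 := by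
  linear_combination trace_sq_eq_moment W hν hpq - (d : ℂ) * trace_mul_self_eq_moment W hν hpq -
    ((d : ℂ) ^ 2 - d) * moment_diag_eq_add W hν hpq

end UnitaryMoment

open UnitaryMoment in
theorem stmt17_general (d : ℕ) (hd : 2 ≤ d) (t : ℝ) (Ev : Fin d → ℝ)
    (W : Matrix (Fin d) (Fin d) ℂ)
    (ν : Measure (Matrix (Fin d) (Fin d) ℂ)) [IsProbabilityMeasure ν]
    (hνsupp : ∀ᵐ U ∂ν, U ∈ Matrix.unitaryGroup (Fin d) ℂ)
    (hνleft : ∀ V ∈ Matrix.unitaryGroup (Fin d) ℂ,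
      Measure.map (fun U => V * U) ν = ν) :
    (∫ U, (1 / d : ℂ) *
        (Matrix.diagonal (fun l => Complex.exp (Complex.I * (t : ℂ) * (Ev l : ℂ))) *
          U * W * Uᴴ *
          Matrix.diagonal (fun l => Complex.exp (-(Complex.I * (t : ℂ) * (Ev l : ℂ)))) *
          U * W * Uᴴ).trace ∂ν)
      = (W.trace / d) ^ 2 +
        ((((Complex.normSq (∑ l, Complex.exp (Complex.I * (t : ℂ) * (Ev l : ℂ))) : ℝ) : ℂ) - 1)
            / ((d : ℂ) ^ 2 - 1)) *
          ((W * W).trace / d - (W.trace / d) ^ 2) := by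
  have hν : IsHaarOnUnitaryGroup ν := ⟨hνsupp, hνleft⟩
  obtain ⟨p, q, hpq⟩ : ∃ p q : Fin d, p ≠ q :=
    ⟨⟨0, by omega⟩, ⟨1, by omega⟩, by simp [Fin.ext_iff]⟩
  set x : Fin d → ℂ := fun l => Complex.I * t * Ev l
  have hdiag : ∑ l, Complex.exp (x l) * Complex.exp (-x l) = d := by
    simp [← Complex.exp_add]
  rw [integral_const_mul, integral_trace_diagonal_mul_diagonal_mul W hν.ae_mem,
    Finset.sum_sum_mul_of_diag_of_offDiag (f := fun a b => moment W ν a b b a)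
      (moment_diag_eq W hν · p) (fun a b hab => (moment_offDiag_eq W hν hab hpq).1),
    Complex.ofReal_normSq_sum_exp x fun l => by simp [x], hdiag]
  have hQ := moment_diag_weingarten W hν hpq
  have hP := moment_offDiag_weingarten W hν hpq
  have hd0 : (d : ℂ) ≠ 0 := by norm_cast; omega
  have hd2 : (d : ℂ) ^ 2 - 1 ≠ 0 := by
    rw [sub_ne_zero]; norm_cast; nlinarith
  set N := (∑ l, Complex.exp (x l)) * ∑ l, Complex.exp (-x l)
  field_simp
  linear_combination (N - d) * hP + (d : ℂ) * (d - 1) * hQ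

/-- Spectral decoupling of the Haar-averaged infinite-temperature two-point function:
for the (normalized, two-sided invariant) Haar probability measure `ν` on `U(d)`, `d ≥ 2`,
a fixed real diagonal matrix `E` and any `W`,
`∫ (1/d)·Tr(e^{itE} U W U† e^{−itE} U W U†) dν(U)
  = ⟨W⟩² + ((|Z(it)|² − 1)/(d² − 1))·(⟨W²⟩ − ⟨W⟩²)`,
where `Z(it) = Tr e^{itE}`, `⟨W⟩ = Tr W / d`, `⟨W²⟩ = Tr W² / d`. -/
theorem stmt17 (d : ℕ) (hd : 2 ≤ d) (t : ℝ) (Ev : Fin d → ℝ)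
    (W : Matrix (Fin d) (Fin d) ℂ)
    (ν : Measure (Matrix (Fin d) (Fin d) ℂ)) [IsProbabilityMeasure ν]
    (hνsupp : ∀ᵐ U ∂ν, U ∈ Matrix.unitaryGroup (Fin d) ℂ)
    (hνleft : ∀ V ∈ Matrix.unitaryGroup (Fin d) ℂ,
      Measure.map (fun U => V * U) ν = ν)
    (hνright : ∀ V ∈ Matrix.unitaryGroup (Fin d) ℂ,
      Measure.map (fun U => U * V) ν = ν) :
    (∫ U, (1 / d : ℂ) *
        (Matrix.diagonal (fun l => Complex.exp (Complex.I * (t : ℂ) * (Ev l : ℂ))) *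
          U * W * Uᴴ *
          Matrix.diagonal (fun l => Complex.exp (-(Complex.I * (t : ℂ) * (Ev l : ℂ)))) *
          U * W * Uᴴ).trace ∂ν)
      = (W.trace / d) ^ 2 +
        ((((Complex.normSq (∑ l, Complex.exp (Complex.I * (t : ℂ) * (Ev l : ℂ))) : ℝ) : ℂ) - 1)
            / ((d : ℂ) ^ 2 - 1)) *
          ((W * W).trace / d - (W.trace / d) ^ 2) :=
  stmt17_general d hd t Ev W ν hνsupp hνleft
end
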